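/- A valid candidate trajectory with switch time t_s ∈ [t_k, t_k + T_H] is a feasible solution of the optimal control problem: it satisfies the dynamics constraint, the safety constraint p(t) ∈ S(t) for all t ∈ [t_k, t_k + T_H + T_B], the initial condition p(t_k) = x_k, and the terminal condition p(t_k + T_H + T_B) ∈ C(t_k + T_H + T_B). -/
import Mathlib


/-- Theorem 1, Claim A: a valid candidate trajectory is a feasible solution of the
finite-horizon optimal control problem: dynamics, safety on [t_k, t_k+T_H+T_B],
initial condition, and terminal condition in the backup set. -/
theorem valid_candidate_is_feasible {X U : Type*}
    (Φ : ℝ → X → Set ((ℝ → X) × (ℝ → U)))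
    (S C : ℝ → Set X) (πB : ℝ → X → U)
    (hΦinit : ∀ t x, ∀ pu ∈ Φ t x, pu.1 t = x)
    (hCS : ∀ t, C t ⊆ S t)
    (hπB : ∀ (p : ℝ → X) (q : ℝ → U) (tᵢ : ℝ),
      (∀ t ≥ tᵢ, q t = πB t (p t)) → p tᵢ ∈ C tᵢ → ∀ t ≥ tᵢ, p t ∈ C t)
    (t_k T_H T_B t_s : ℝ) (x_k : X)
    (pnom : ℝ → X) (unom : ℝ → U)
    (pcan : ℝ → X) (ucan : ℝ → U) (pbak : ℝ → X) (ubak : ℝ → U)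
    (hTB : 0 ≤ T_B)
    (hts : t_s ∈ Set.Icc t_k (t_k + T_H))
    (hnomΦ : (pnom, unom) ∈ Φ t_k x_k)
    (hcanΦ : (pcan, ucan) ∈ Φ t_k x_k)
    (hbakΦ : (pbak, ubak) ∈ Φ t_s (pnom t_s))
    (hnom : ∀ t ∈ Set.Ico t_k t_s, pcan t = pnom t ∧ ucan t = unom t)
    (hbak : ∀ t ≥ t_s, pcan t = pbak t ∧ ucan t = ubak t)
    (hbakC : pbak (t_s + T_B) ∈ C (t_s + T_B))
    (hbakπ : ∀ t ≥ t_s + T_B, ubak t = πB t (pbak t))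
    (hvalid : ∀ t ∈ Set.Icc t_k (t_s + T_B), pcan t ∈ S t) :
    (pcan, ucan) ∈ Φ t_k x_k ∧
    (∀ t ∈ Set.Icc t_k (t_k + T_H + T_B), pcan t ∈ S t) ∧
    pcan t_k = x_k ∧
    pcan (t_k + T_H + T_B) ∈ C (t_k + T_H + T_B) := by
  obtain ⟨hts1, hts2⟩ := hts
  have hC : ∀ t ≥ t_s + T_B, pbak t ∈ C t :=
    hπB pbak ubak (t_s + T_B) hbakπ hbakC
  refine ⟨hcanΦ, ?_, hΦinit _ _ _ hcanΦ, ?_⟩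
  · intro t ⟨ht1, ht2⟩
    by_cases h : t ≤ t_s + T_B
    · exact hvalid t ⟨ht1, h⟩
    · push_neg at h
      have hts' : t ≥ t_s := le_trans (le_add_of_nonneg_right hTB) h.le
      rw [(hbak t hts').1]
      exact hCS t (hC t h.le)
  · have h : t_k + T_H + T_B ≥ t_s + T_B := by linarith
    rw [(hbak _ (le_trans (le_add_of_nonneg_right hTB) h)).1]
    exact hC _ h
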